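/- For every separately continuous function f : [0,1] × [0,1] → ℝ, the set D(f) of points of discontinuity of f is contained in a product A × B where A, B ⊆ [0,1] are meagre (first category) sets. -/

import Mathlib

/-!
Let `E δ ε` be the set of `x` for which `δ` is a modulus of uniform continuity of `f (x, ·)` at
scale `ε`. Continuity in `x` makes each `E δ ε` closed, and compactness of the second factor makes
`⋃ δ, E δ ε` everything. The frontier of a closed set is nowhere dense, so off a meagre set every
`x` lies in the interior of some `E δ ε` for each `ε`: the sections `f (x', ·)` are equicontinuous
for `x'` near `x`, and together with continuity in `x` this gives joint continuity at `(x, y)`.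
Swapping the variables gives the meagre set of second coordinates.
-/

open Set Filter Topology Metric

section SeparatelyContinuous

variable {X Y Z : Type*} [PseudoMetricSpace Y] [PseudoMetricSpace Z]

def uniformModulusSet (f : X × Y → Z) (δ ε : ℝ) : Set X :=
  {x | ∀ y y', dist y y' ≤ δ → dist (f (x, y)) (f (x, y')) ≤ ε}

lemma exists_mem_uniformModulusSet [CompactSpace Y] {f : X × Y → Z}
    (hf : ∀ x, Continuous fun y => f (x, y)) (x : X) {ε : ℝ} (hε : 0 < ε) :
    ∃ m : ℕ, x ∈ uniformModulusSet f (1 / (m + 1)) ε := by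
  obtain ⟨δ, hδ, hfδ⟩ :=
    uniformContinuous_iff.1 (CompactSpace.uniformContinuous_of_continuous (hf x)) ε hε
  obtain ⟨m, hm⟩ := exists_nat_one_div_lt hδ
  exact ⟨m, fun y y' hyy' => (hfδ (hyy'.trans_lt hm)).le⟩

variable [TopologicalSpace X]

lemma isMeagre_iUnion_frontier {ι : Type*} [Countable ι] {s : ι → Set X}
    (hs : ∀ i, IsClosed (s i)) : IsMeagre (⋃ i, frontier (s i)) :=
  isMeagre_iUnion fun i =>
    (isClosed_frontier.isNowhereDense_iff.2 (interior_frontier (hs i))).isMeagre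

lemma isClosed_uniformModulusSet {f : X × Y → Z} (hf : ∀ y, Continuous fun x => f (x, y))
    (δ ε : ℝ) : IsClosed (uniformModulusSet f δ ε) := by
  simp only [uniformModulusSet, ofPred_forall]
  exact isClosed_iInter fun y => isClosed_iInter fun y' => isClosed_iInter fun _ =>
    isClosed_le ((hf y).dist (hf y')) continuous_const

lemma continuousAt_of_eventually_dist_le {f : X × Y → Z} {x : X} {y : Y}
    (hf : ContinuousAt (fun x' => f (x', y)) x)
    (h : ∀ ε > 0, ∃ δ > 0, ∀ᶠ x' in 𝓝 x, ∀ y', dist y' y < δ → dist (f (x', y')) (f (x', y)) ≤ ε) :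
    ContinuousAt f (x, y) := by
  rw [ContinuousAt, Metric.tendsto_nhds]
  intro ε hε
  obtain ⟨δ, hδ, hequi⟩ := h (ε / 2) (half_pos hε)
  have hnear := Metric.tendsto_nhds.1 hf (ε / 2) (half_pos hε)
  filter_upwards [(hequi.and hnear).prodMk_nhds (ball_mem_nhds y hδ)]
    with ⟨x', y'⟩ ⟨⟨hx'y', hx'⟩, hy'⟩
  calc dist (f (x', y')) (f (x, y))
      ≤ dist (f (x', y')) (f (x', y)) + dist (f (x', y)) (f (x, y)) := dist_triangle _ _ _
    _ < ε / 2 + ε / 2 := add_lt_add_of_le_of_lt (hx'y' y' hy') hx'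
    _ = ε := add_halves ε

theorem exists_isMeagre_forall_continuousAt [CompactSpace Y] {f : X × Y → Z}
    (hfx : ∀ x, Continuous fun y => f (x, y)) (hfy : ∀ y, Continuous fun x => f (x, y)) :
    ∃ A : Set X, IsMeagre A ∧ ∀ p : X × Y, ¬ContinuousAt f p → p.1 ∈ A := by
  set E : ℕ × ℕ → Set X := fun k => uniformModulusSet f (1 / (k.1 + 1)) (1 / (k.2 + 1))
  have hE : ∀ k, IsClosed (E k) := fun k => isClosed_uniformModulusSet hfy _ _
  refine ⟨⋃ k, frontier (E k), isMeagre_iUnion_frontier hE, fun ⟨x, y⟩ hp => ?_⟩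
  by_contra hx
  refine hp (continuousAt_of_eventually_dist_le (hfy y).continuousAt fun ε hε => ?_)
  obtain ⟨n, hn⟩ := exists_nat_one_div_lt hε
  obtain ⟨m, hm⟩ := exists_mem_uniformModulusSet hfx x (ε := 1 / (n + 1)) (by positivity)
  have hint : x ∈ interior (E (m, n)) := by
    by_contra hint
    exact hx (mem_iUnion.2 ⟨(m, n), (hE _).frontier_eq ▸ ⟨hm, hint⟩⟩)
  refine ⟨1 / (m + 1), by positivity, ?_⟩
  filter_upwards [isOpen_interior.mem_nhds hint] with x' hx' y' hy'
  exact (interior_subset hx' y' y hy'.le).trans hn.le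

end SeparatelyContinuous

theorem exists_isMeagre_prod_of_separatelyContinuous {X Y Z : Type*} [PseudoMetricSpace X]
    [PseudoMetricSpace Y] [PseudoMetricSpace Z] [CompactSpace X] [CompactSpace Y] {f : X × Y → Z}
    (hfx : ∀ x, Continuous fun y => f (x, y)) (hfy : ∀ y, Continuous fun x => f (x, y)) :
    ∃ A : Set X, ∃ B : Set Y, IsMeagre A ∧ IsMeagre B ∧ {p | ¬ContinuousAt f p} ⊆ A ×ˢ B := by
  obtain ⟨A, hA, hfA⟩ := exists_isMeagre_forall_continuousAt hfx hfy
  obtain ⟨B, hB, hfB⟩ := exists_isMeagre_forall_continuousAt (f := f ∘ Prod.swap) hfy hfx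
  refine ⟨A, B, hA, hB, fun p hp => ⟨hfA p hp, hfB p.swap fun hc => hp ?_⟩⟩
  exact (Homeomorph.prodComm X Y).symm.comp_continuousAt_iff' f p.swap |>.1 hc

theorem stmt18 (f : Icc (0:ℝ) 1 × Icc (0:ℝ) 1 → ℝ)
    (hfx : ∀ x : Icc (0:ℝ) 1, Continuous fun y => f (x, y))
    (hfy : ∀ y : Icc (0:ℝ) 1, Continuous fun x => f (x, y)) :
    ∃ A B : Set (Icc (0:ℝ) 1), IsMeagre A ∧ IsMeagre B ∧
      {p | ¬ ContinuousAt f p} ⊆ A ×ˢ B :=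
  exists_isMeagre_prod_of_separatelyContinuous hfx hfy
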